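/- Propagation of chaos: Let F be a Polish space, and for each N ≥ 1 let Q_N be an exchangeable probability measure on F^N. For u = (u_1,...,u_N) ∈ F^N let μ_u = (1/N)·Σ_{i=1}^N δ_{u_i} denote the empirical measure, an element of the space P(F) of Borel probability measures on F equipped with the topology of weak convergence. Let μ₀ ∈ P(F) and assume that for every bounded continuous function Φ : P(F) → ℝ, ∫_{F^N} Φ(μ_u) dQ_N(u) → Φ(μ₀) as N → ∞. Then for every k ≥ 1 and all bounded continuous functions f_1,...,f_k : F → ℝ, ∫_{F^N} Π_{i=1}^k f_i(u_i) dQ_N(u) → Π_{i=1}^k ∫_F f_i(η) dμ₀(η) as N → ∞; that is, the k-dimensional marginals of Q_N converge weakly to the product measure μ₀^{⊗k}. -/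

import Mathlib

/-!
`Φ ν = ∏ᵢ ∫ fᵢ dν` is bounded and continuous on `P(F)`, so `∫ Φ(μ_u) dQ_N → Φ(μ₀)`. Expanding
the product, `Φ(μ_u) = N⁻ᵏ ∑_{j : Fin k → Fin N} ∏ᵢ fᵢ(u_{j i})`. By exchangeability every
injective `j` has the same `Q_N`-integral as the inclusion `Fin k ↪ Fin N`, which is the
`k`-marginal term, while the non-injective `j` make up a fraction `1 - N(N-1)⋯(N-k+1)/Nᵏ → 0`
of all `j`, each term being bounded by `∏ᵢ ‖fᵢ‖`.
-/


open MeasureTheory Filter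
open scoped ENNReal

noncomputable def empiricalMeasure {F : Type*} [MeasurableSpace F] {N : ℕ} (hN : 0 < N)
    (u : Fin N → F) : ProbabilityMeasure F :=
  ⟨(N : ℝ≥0∞)⁻¹ • ∑ i, Measure.dirac (u i), ⟨by
    simp only [Measure.smul_apply, Measure.coe_finset_sum, Finset.sum_apply,
      smul_eq_mul, measure_univ, Finset.sum_const, Finset.card_univ, Fintype.card_fin,
      nsmul_eq_mul, mul_one]
    exact ENNReal.inv_mul_cancel (Nat.cast_ne_zero.mpr hN.ne') (ENNReal.natCast_ne_top N)⟩⟩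

open Topology Finset BoundedContinuousFunction

section Empirical

variable {F : Type*} [MeasurableSpace F] {N : ℕ} (hN : 0 < N) (u : Fin N → F)

lemma integral_empiricalMeasure {g : F → ℝ} (hg : StronglyMeasurable g) :
    ∫ x, g x ∂(empiricalMeasure hN u : Measure F) = (N : ℝ)⁻¹ * ∑ j, g (u j) := by
  change ∫ x, g x ∂((N : ℝ≥0∞)⁻¹ • ∑ i, Measure.dirac (u i)) = _
  rw [integral_smul_measure,
    integral_finsetSum_measure fun i _ => integrable_dirac' hg enorm_lt_top]
  simp [integral_dirac' _ _ hg]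

lemma prod_integral_empiricalMeasure {k : ℕ} {g : Fin k → F → ℝ}
    (hg : ∀ i, StronglyMeasurable (g i)) :
    ∏ i, ∫ x, g i x ∂(empiricalMeasure hN u : Measure F) =
      ((N : ℝ) ^ k)⁻¹ * ∑ j : Fin k → Fin N, ∏ i, g i (u (j i)) := by
  simp only [integral_empiricalMeasure hN u (hg _), prod_mul_distrib, prod_const, card_univ,
    Fintype.card_fin, prod_univ_sum, Fintype.piFinset_univ, inv_pow]

end Empirical

def IsExchangeable {F : Type*} [MeasurableSpace F] {N : ℕ} (Q : Measure (Fin N → F)) : Prop :=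
  ∀ s : Equiv.Perm (Fin N), Q.map (fun u i => u (s i)) = Q

lemma IsExchangeable.integral_comp_eq {F E : Type*} [MeasurableSpace F] [NormedAddCommGroup E]
    [NormedSpace ℝ E] {N k : ℕ} {Q : Measure (Fin N → F)} (hQ : IsExchangeable Q)
    (G : (Fin k → F) → E)
    {j₁ j₂ : Fin k → Fin N} (h₁ : j₁.Injective) (h₂ : j₂.Injective) :
    ∫ u, G (fun i => u (j₁ i)) ∂Q = ∫ u, G (fun i => u (j₂ i)) ∂Q := by
  obtain ⟨σ, hσ⟩ := Equiv.Perm.exists_extending_pair j₁ j₂ h₁ h₂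
  let e : (Fin N → F) ≃ᵐ (Fin N → F) := .arrowCongr' σ.symm (.refl F)
  have he : ⇑e = fun u i => u (σ i) := rfl
  calc ∫ u, G (fun i => u (j₁ i)) ∂Q
      = ∫ u, G (fun i => u (j₁ i)) ∂(Q.map e) := by rw [he, hQ σ]
    _ = ∫ u, G (fun i => u (j₂ i)) ∂Q := by rw [integral_map_equiv]; simp only [he, hσ]

lemma abs_sum_sub_card_mul_le {ι : Type*} [DecidableEq ι] {s t : Finset ι} (hts : t ⊆ s)
    {I : ι → ℝ} {a C : ℝ} (ht : ∀ j ∈ t, I j = a) (hs : ∀ j ∈ s, |I j - a| ≤ C) :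
    |∑ j ∈ s, I j - #s * a| ≤ #(s \ t) * C := by
  have hsum : ∑ j ∈ s, I j - #s * a = ∑ j ∈ s \ t, (I j - a) := by
    rw [← sum_sdiff hts, ← card_sdiff_add_card_eq_card hts, sum_congr rfl ht, sum_sub_distrib]
    simp only [sum_const, nsmul_eq_mul, Nat.cast_add]
    ring
  rw [hsum]
  calc |∑ j ∈ s \ t, (I j - a)| ≤ ∑ j ∈ s \ t, |I j - a| := abs_sum_le_sum_abs _ _
    _ ≤ #(s \ t) * C := by
      simpa using sum_le_card_nsmul _ _ C fun j hj => hs j (mem_sdiff.mp hj).1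

lemma tendsto_descFactorial_div_pow (k : ℕ) :
    Tendsto (fun N : ℕ => (N.descFactorial k : ℝ) / N ^ k) atTop (𝓝 1) :=
  (Asymptotics.isEquivalent_iff_tendsto_one
    (eventually_ge_atTop 1 |>.mono fun N hN => by positivity)).mp
    (isEquivalent_descFactorial k)

lemma norm_prod_apply_le {ι X : Type*} [Fintype ι] [TopologicalSpace X] (f : ι → X →ᵇ ℝ)
    (x : ι → X) : ‖∏ i, f i (x i)‖ ≤ ∏ i, ‖f i‖ :=
  (Finset.norm_prod_le _ _).trans <| prod_le_prod (fun _ _ => norm_nonneg _) fun i _ =>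
    (f i).norm_coe_le_norm (x i)

lemma card_filter_injective_fin (k N : ℕ) :
    #(univ.filter fun j : Fin k → Fin N => j.Injective) = N.descFactorial k := by
  rw [← Fintype.card_subtype, Fintype.card_congr (Equiv.subtypeInjectiveEquivEmbedding _ _),
    Fintype.card_embedding_eq, Fintype.card_fin, Fintype.card_fin]

lemma abs_integral_prod_integral_empiricalMeasure_sub_le {F : Type*} [TopologicalSpace F]
    [MeasurableSpace F] [OpensMeasurableSpace F] {k N : ℕ} (f : Fin k → F →ᵇ ℝ) (hN : 0 < N)
    (hkN : k ≤ N) (Q : Measure (Fin N → F)) [IsProbabilityMeasure Q] (hQ : IsExchangeable Q) :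
    |∫ u, ∏ i, ∫ x, f i x ∂(empiricalMeasure hN u : Measure F) ∂Q
        - ∫ u, ∏ i, f i (u (Fin.castLE hkN i)) ∂Q|
      ≤ 2 * (∏ i, ‖f i‖) * (1 - (N.descFactorial k : ℝ) / N ^ k) := by
  classical
  set C := ∏ i, ‖f i‖
  set I : (Fin k → Fin N) → ℝ := fun j => ∫ u, ∏ i, f i (u (j i)) ∂Q
  have hint (j : Fin k → Fin N) : Integrable (fun u : Fin N → F => ∏ i, f i (u (j i))) Q :=
    .of_bound (Finset.measurable_prod _ fun i _ =>
        (f i).continuous.measurable.comp (measurable_pi_apply _)).aestronglyMeasurable C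
      (ae_of_all _ fun u => norm_prod_apply_le f _)
  have hI (j : Fin k → Fin N) : |I j| ≤ C := by
    simpa using norm_integral_le_of_norm_le_const
      (ae_of_all Q fun u => norm_prod_apply_le f fun i => u (j i))
  have hsym : ∀ j ∈ univ.filter Function.Injective, I j = I (Fin.castLE hkN) := fun j hj =>
    hQ.integral_comp_eq (fun v => ∏ i, f i (v i)) (mem_filter.1 hj).2 (Fin.castLE_injective hkN)
  have hsum := abs_sum_sub_card_mul_le (filter_subset _ univ) hsym (C := 2 * C) fun j _ =>
    (abs_sub _ _).trans (by linarith [hI j, hI (Fin.castLE hkN)])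
  rw [card_sdiff_of_subset (filter_subset _ _), card_filter_injective_fin, card_univ,
    Fintype.card_pi, prod_const, card_univ, Fintype.card_fin, Fintype.card_fin,
    Nat.cast_sub (Nat.descFactorial_le_pow N k), Nat.cast_pow] at hsum
  have hemp : ∫ u, ∏ i, ∫ x, f i x ∂(empiricalMeasure hN u : Measure F) ∂Q
      = ((N : ℝ) ^ k)⁻¹ * ∑ j, I j := by
    simp_rw [prod_integral_empiricalMeasure hN _ fun i => (f i).continuous.stronglyMeasurable]
    rw [integral_const_mul, integral_finsetSum _ fun j _ => hint j]
  have hpos : (0 : ℝ) < (N : ℝ) ^ k := by positivity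
  rw [hemp, show ((N : ℝ) ^ k)⁻¹ * ∑ j, I j - I (Fin.castLE hkN)
      = (∑ j, I j - (N : ℝ) ^ k * I (Fin.castLE hkN)) / (N : ℝ) ^ k by field_simp,
    abs_div, abs_of_pos hpos, div_le_iff₀ hpos]
  calc _ ≤ _ := hsum
    _ = _ := by field_simp

theorem propagation_of_chaos_general
    {F : Type*} [TopologicalSpace F] [MeasurableSpace F] [BorelSpace F]
    (Q : (N : ℕ) → Measure (Fin N → F))
    (hprob : ∀ N, 1 ≤ N → IsProbabilityMeasure (Q N))
    (hexch : ∀ N, 1 ≤ N → ∀ s : Equiv.Perm (Fin N),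
      Measure.map (fun u i => u (s i)) (Q N) = Q N)
    (μ₀ : ProbabilityMeasure F)
    (hconv : ∀ Φ : ProbabilityMeasure F → ℝ, Continuous Φ → (∃ C, ∀ ν, |Φ ν| ≤ C) →
      Tendsto
        (fun N : ℕ => if h : 0 < N then ∫ u, Φ (empiricalMeasure h u) ∂(Q N) else 0)
        atTop (nhds (Φ μ₀)))
    (k : ℕ) (f : Fin k → F → ℝ)
    (hfc : ∀ i, Continuous (f i)) (hfb : ∀ i, ∃ C, ∀ x, |f i x| ≤ C) :
    Tendsto
      (fun N : ℕ =>
        if h : k ≤ N then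
          ∫ u, ∏ i : Fin k, f i (u (Fin.castLE h i)) ∂(Q N)
        else 0)
      atTop (nhds (∏ i : Fin k, ∫ x, f i x ∂(μ₀ : Measure F))) := by
  have hbcf : ∀ i, ∃ g : F →ᵇ ℝ, ⇑g = f i := fun i =>
    let ⟨C, hC⟩ := hfb i
    ⟨.ofNormedAddCommGroup (f i) (hfc i) C hC, rfl⟩
  choose g hg using hbcf
  obtain rfl : f = fun i => ⇑(g i) := funext fun i => (hg i).symm
  set Φ : ProbabilityMeasure F → ℝ := fun ν => ∏ i, ∫ x, g i x ∂(ν : Measure F)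
  have hΦ_cont : Continuous Φ := continuous_finsetProd _ fun i _ =>
    ProbabilityMeasure.continuous_integral_boundedContinuousFunction (g i)
  have hΦ_bdd (ν : ProbabilityMeasure F) : |Φ ν| ≤ ∏ i, ‖g i‖ :=
    (Finset.norm_prod_le _ _).trans <| prod_le_prod (fun _ _ => norm_nonneg _) fun i _ =>
      (g i).norm_integral_le_norm (μ := ν)
  have hgap : Tendsto (fun N : ℕ => 2 * (∏ i, ‖g i‖) * (1 - (N.descFactorial k : ℝ) / N ^ k))
      atTop (𝓝 0) := by
    simpa using ((tendsto_descFactorial_div_pow k).const_sub 1).const_mul (2 * ∏ i, ‖g i‖)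
  refine (hconv Φ hΦ_cont ⟨_, hΦ_bdd⟩).congr_dist
    (squeeze_zero' (.of_forall fun _ => dist_nonneg) ?_ hgap)
  filter_upwards [eventually_ge_atTop k, eventually_gt_atTop 0] with N hkN hN
  have := hprob N hN
  rw [dif_pos hN, dif_pos hkN, Real.dist_eq]
  exact abs_integral_prod_integral_empiricalMeasure_sub_le g hN hkN (Q N) (hexch N hN)

/-- **Propagation of chaos.** Let `F` be a Polish space and `(Q_N)` exchangeable
probability measures on `F^N`.  If the empirical measures converge in the sense that
`∫ Φ(μ_u) dQ_N(u) → Φ(μ₀)` for every bounded continuous `Φ : P(F) → ℝ`, then for every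
`k ≥ 1` and all bounded continuous `f_1,…,f_k : F → ℝ`,
`∫ ∏_{i=1}^k f_i(u_i) dQ_N(u) → ∏_{i=1}^k ∫ f_i dμ₀`, i.e. the `k`-dimensional marginals
of `Q_N` converge weakly to `μ₀^{⊗k}`. -/
theorem propagation_of_chaos
    {F : Type*} [TopologicalSpace F] [PolishSpace F] [MeasurableSpace F] [BorelSpace F]
    (Q : (N : ℕ) → Measure (Fin N → F))
    (hprob : ∀ N, 1 ≤ N → IsProbabilityMeasure (Q N))
    (hexch : ∀ N, 1 ≤ N → ∀ s : Equiv.Perm (Fin N),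
      Measure.map (fun u i => u (s i)) (Q N) = Q N)
    (μ₀ : ProbabilityMeasure F)
    (hconv : ∀ Φ : ProbabilityMeasure F → ℝ, Continuous Φ → (∃ C, ∀ ν, |Φ ν| ≤ C) →
      Tendsto
        (fun N : ℕ => if h : 0 < N then ∫ u, Φ (empiricalMeasure h u) ∂(Q N) else 0)
        atTop (nhds (Φ μ₀)))
    (k : ℕ) (hk : 1 ≤ k) (f : Fin k → F → ℝ)
    (hfc : ∀ i, Continuous (f i)) (hfb : ∀ i, ∃ C, ∀ x, |f i x| ≤ C) :
    Tendsto
      (fun N : ℕ =>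
        if h : k ≤ N then
          ∫ u, ∏ i : Fin k, f i (u (Fin.castLE h i)) ∂(Q N)
        else 0)
      atTop (nhds (∏ i : Fin k, ∫ x, f i x ∂(μ₀ : Measure F))) :=
  propagation_of_chaos_general Q hprob hexch μ₀ hconv k f hfc hfb
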